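/- arXiv:1801.03340 — 4 statements merged into one kernel-verified Lean document; each statement's English description precedes it below -/
import Mathlib

section
/- For every integer d ≥ 2, at the critical inverse temperature β = β_c = arctanh(1/d), there exist constants c, C > 0 such that for all integers n ≥ 1, c·n^{-1/2} < (x_{n−1} − y_{n−1})/(x_{n−1} + y_{n−1}) < C·n^{-1/2}, where (x_n, y_n) is the recursively defined pair of sequences below evaluated at β = β_c. -/
set_option maxHeartbeats 1600000


/-- The pair of recursively defined sequences `(x_n, y_n)`:
`x_0 = (e^{β(d+1)} + e^{−β(d+1)})^d`, `y_0 = (e^{β(d−1)} + e^{−β(d−1)})^d`, and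
`x_n = (e^β x_{n−1} + e^{−β} y_{n−1})^d`, `y_n = (e^β y_{n−1} + e^{−β} x_{n−1})^d`. -/
noncomputable def xy (β : ℝ) (d : ℕ) : ℕ → ℝ × ℝ
  | 0 => ((Real.exp (β * ((d : ℝ) + 1)) + Real.exp (-β * ((d : ℝ) + 1))) ^ d,
          (Real.exp (β * ((d : ℝ) - 1)) + Real.exp (-β * ((d : ℝ) - 1))) ^ d)
  | n + 1 => ((Real.exp β * (xy β d n).1 + Real.exp (-β) * (xy β d n).2) ^ d,
              (Real.exp β * (xy β d n).2 + Real.exp (-β) * (xy β d n).1) ^ d)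

/-- The critical inverse temperature `β_c = arctanh (1/d) = (1/2)·log((d+1)/(d−1))`. -/
noncomputable def betaCrit (d : ℕ) : ℝ := (1 / 2) * Real.log (((d : ℝ) + 1) / ((d : ℝ) - 1))



lemma pow_succ_sub_le' (a b : ℝ) (hb : 0 ≤ b) (hba : b ≤ a) :
    ∀ m : ℕ, a ^ (m+1) - b ^ (m+1) ≤ (m+1 : ℝ) * a ^ m * (a - b)
  | 0 => by simp
  | m+1 => by
    have ih := pow_succ_sub_le' a b hb hba m
    have ha : 0 ≤ a := hb.trans hba
    have hbm : b ^ (m+1) ≤ a ^ (m+1) := pow_le_pow_left₀ hb hba _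
    have key : a^(m+1+1) - b^(m+1+1) = a * (a^(m+1) - b^(m+1)) + b^(m+1) * (a - b) := by ring
    have h1 : a * (a^(m+1) - b^(m+1)) ≤ (m+1 : ℝ) * a^(m+1) * (a-b) := by
      calc a * (a^(m+1) - b^(m+1)) ≤ a * ((m+1 : ℝ) * a ^ m * (a - b)) :=
            mul_le_mul_of_nonneg_left ih ha
        _ = (m+1 : ℝ) * a^(m+1) * (a-b) := by rw [pow_succ]; ring
    have h2 : b^(m+1) * (a-b) ≤ a^(m+1) * (a-b) :=
      mul_le_mul_of_nonneg_right hbm (by linarith)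
    rw [key]; push_cast; linarith

lemma le_pow_succ_sub (a b : ℝ) (hb : 0 ≤ b) (hba : b ≤ a) :
    ∀ m : ℕ, (m+1 : ℝ) * b ^ m * (a - b) ≤ a ^ (m+1) - b ^ (m+1)
  | 0 => by simp
  | m+1 => by
    have ih := le_pow_succ_sub a b hb hba m
    have ha : 0 ≤ a := hb.trans hba
    have hbm : b ^ (m+1) ≤ a ^ (m+1) := pow_le_pow_left₀ hb hba _
    have key : a^(m+1+1) - b^(m+1+1) = a * (a^(m+1) - b^(m+1)) + b^(m+1) * (a - b) := by ring
    have h1 : (m+1 : ℝ) * b^(m+1) * (a-b) ≤ a * (a^(m+1) - b^(m+1)) := by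
      calc (m+1 : ℝ) * b^(m+1) * (a-b) = b * ((m+1 : ℝ) * b ^ m * (a - b)) := by
            rw [pow_succ]; ring
        _ ≤ b * (a^(m+1) - b^(m+1)) := mul_le_mul_of_nonneg_left ih hb
        _ ≤ a * (a^(m+1) - b^(m+1)) := mul_le_mul_of_nonneg_right hba (by linarith)
    rw [key]; push_cast; linarith

lemma phi_hasDeriv (m : ℕ) (r : ℝ) :
    HasDerivAt (fun t : ℝ => (t-1)*(((m:ℝ)+2)+t)^(m+2) + (t+1)*(((m:ℝ)+2)-t)^(m+2))
      (((m:ℝ)+3)*r*((((m:ℝ)+2)+r)^(m+1) - (((m:ℝ)+2)-r)^(m+1))) r := by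
  have h1 : HasDerivAt (fun t : ℝ => (((m:ℝ)+2)+t)^(m+2)) (((m:ℝ)+2)*(((m:ℝ)+2)+r)^(m+1)*1) r := by
    have := ((hasDerivAt_id r).const_add ((m:ℝ)+2)).pow (m+2)
    exact this.congr_deriv (by push_cast; simp)
  have h2 : HasDerivAt (fun t : ℝ => (((m:ℝ)+2)-t)^(m+2)) (((m:ℝ)+2)*(((m:ℝ)+2)-r)^(m+1)*(-1)) r := by
    have := ((hasDerivAt_id r).neg.const_add ((m:ℝ)+2)).pow (m+2)
    exact this.congr_deriv (by push_cast; simp [sub_eq_add_neg])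
  have h := (((hasDerivAt_id r).sub_const 1).mul h1).add (((hasDerivAt_id r).add_const 1).mul h2)
  exact h.congr_deriv (by simp only [id_eq]; ring)

lemma phi_lb (m : ℕ) (r : ℝ) (h0 : 0 ≤ r) (h1 : r ≤ 1) :
    (2/3)*((m:ℝ)+3)*((m:ℝ)+1)^(m+1) * r^3 ≤
      (r-1)*(((m:ℝ)+2)+r)^(m+2) + (r+1)*(((m:ℝ)+2)-r)^(m+2) := by
  set c : ℝ := (2/3)*((m:ℝ)+3)*((m:ℝ)+1)^(m+1) with hc
  set ψ : ℝ → ℝ := fun t => (t-1)*(((m:ℝ)+2)+t)^(m+2) + (t+1)*(((m:ℝ)+2)-t)^(m+2) - c*t^3 with hψ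
  have hder : ∀ t : ℝ, HasDerivAt ψ
      (((m:ℝ)+3)*t*((((m:ℝ)+2)+t)^(m+1) - (((m:ℝ)+2)-t)^(m+1)) - c*(3*t^2)) t := by
    intro t
    exact (phi_hasDeriv m t).sub (((hasDerivAt_pow 3 t).const_mul c).congr_deriv (by push_cast; ring))
  have hmono : MonotoneOn ψ (Set.Icc 0 1) := by
    apply monotoneOn_of_deriv_nonneg (convex_Icc 0 1)
    · exact fun t _ => ((hder t).continuousAt).continuousWithinAt
    · exact fun t _ => ((hder t).differentiableAt).differentiableWithinAt
    · intro t ht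
      rw [interior_Icc] at ht
      rw [(hder t).deriv]
      have ht0 : 0 ≤ t := le_of_lt ht.1
      have ht1 : t ≤ 1 := le_of_lt ht.2
      have hb : (0:ℝ) ≤ ((m:ℝ)+2) - t := by linarith
      have hba : ((m:ℝ)+2) - t ≤ ((m:ℝ)+2) + t := by linarith
      have key := le_pow_succ_sub (((m:ℝ)+2)+t) (((m:ℝ)+2)-t) hb hba m
      have hpow : ((m:ℝ)+1)^m ≤ (((m:ℝ)+2)-t)^m := by
        apply pow_le_pow_left₀ (by positivity) (by linarith)
      have e1 : ((m:ℝ)+1)^(m+1)*(2*t) ≤ ((m:ℝ)+1)*((((m:ℝ)+2)-t)^m)*(2*t) := by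
        have := mul_le_mul_of_nonneg_right hpow
          (mul_nonneg (by positivity : (0:ℝ) ≤ (m:ℝ)+1) (by linarith : (0:ℝ) ≤ 2*t))
        rw [pow_succ]; nlinarith [this]
      have e2 : ((m:ℝ)+1)*((((m:ℝ)+2)-t)^m)*(2*t) ≤
          (((m:ℝ)+2)+t)^(m+1) - (((m:ℝ)+2)-t)^(m+1) := by nlinarith [key]
      have key2 : ((m:ℝ)+1)^(m+1)*(2*t) ≤
          (((m:ℝ)+2)+t)^(m+1) - (((m:ℝ)+2)-t)^(m+1) := e1.trans e2
      have e3 := mul_le_mul_of_nonneg_left key2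
        (show (0:ℝ) ≤ ((m:ℝ)+3)*t by positivity)
      have e4 : c*(3*t^2) = ((m:ℝ)+3)*t*(((m:ℝ)+1)^(m+1)*(2*t)) := by rw [hc]; ring
      nlinarith [e3]
  have h := hmono (Set.mem_Icc.mpr ⟨le_refl 0, zero_le_one⟩) (Set.mem_Icc.mpr ⟨h0, h1⟩) h0
  have hψ0 : ψ 0 = 0 := by simp [hψ]
  rw [hψ0] at h
  simp only [hψ] at h
  linarith

lemma phi_ub (m : ℕ) (r : ℝ) (h0 : 0 ≤ r) (h1 : r ≤ 1) :
    (r-1)*(((m:ℝ)+2)+r)^(m+2) + (r+1)*(((m:ℝ)+2)-r)^(m+2) ≤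
      (2/3)*((m:ℝ)+1)*((m:ℝ)+3)^(m+1) * r^3 := by
  set c : ℝ := (2/3)*((m:ℝ)+1)*((m:ℝ)+3)^(m+1) with hc
  set ψ : ℝ → ℝ := fun t => c*t^3 - ((t-1)*(((m:ℝ)+2)+t)^(m+2) + (t+1)*(((m:ℝ)+2)-t)^(m+2)) with hψ
  have hder : ∀ t : ℝ, HasDerivAt ψ
      (c*(3*t^2) - ((m:ℝ)+3)*t*((((m:ℝ)+2)+t)^(m+1) - (((m:ℝ)+2)-t)^(m+1))) t := by
    intro t
    exact (((hasDerivAt_pow 3 t).const_mul c).congr_deriv (by push_cast; ring)).sub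
      (phi_hasDeriv m t)
  have hmono : MonotoneOn ψ (Set.Icc 0 1) := by
    apply monotoneOn_of_deriv_nonneg (convex_Icc 0 1)
    · exact fun t _ => ((hder t).continuousAt).continuousWithinAt
    · exact fun t _ => ((hder t).differentiableAt).differentiableWithinAt
    · intro t ht
      rw [interior_Icc] at ht
      rw [(hder t).deriv]
      have ht0 : 0 ≤ t := le_of_lt ht.1
      have ht1 : t ≤ 1 := le_of_lt ht.2
      have hb : (0:ℝ) ≤ ((m:ℝ)+2) - t := by linarith
      have hba : ((m:ℝ)+2) - t ≤ ((m:ℝ)+2) + t := by linarith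
      have key := pow_succ_sub_le' (((m:ℝ)+2)+t) (((m:ℝ)+2)-t) hb hba m
      have hpow : (((m:ℝ)+2)+t)^m ≤ ((m:ℝ)+3)^m := by
        apply pow_le_pow_left₀ (by linarith) (by linarith)
      have e1 : ((m:ℝ)+1)*((((m:ℝ)+2)+t)^m)*(2*t) ≤ ((m:ℝ)+1)*(((m:ℝ)+3)^m)*(2*t) := by
        have := mul_le_mul_of_nonneg_right hpow
          (mul_nonneg (by positivity : (0:ℝ) ≤ (m:ℝ)+1) (by linarith : (0:ℝ) ≤ 2*t))
        nlinarith [this]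
      have e2 : (((m:ℝ)+2)+t)^(m+1) - (((m:ℝ)+2)-t)^(m+1) ≤
          ((m:ℝ)+1)*((((m:ℝ)+2)+t)^m)*(2*t) := by nlinarith [key]
      have key2 : (((m:ℝ)+2)+t)^(m+1) - (((m:ℝ)+2)-t)^(m+1) ≤ ((m:ℝ)+1)*(((m:ℝ)+3)^m)*(2*t) :=
        e2.trans e1
      have e3 := mul_le_mul_of_nonneg_left key2
        (show (0:ℝ) ≤ ((m:ℝ)+3)*t by positivity)
      have e4 : c*(3*t^2) = ((m:ℝ)+3)*t*(((m:ℝ)+1)*(((m:ℝ)+3)^m)*(2*t)) := by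
        rw [hc, pow_succ]; ring
      nlinarith [e3]
  have h := hmono (Set.mem_Icc.mpr ⟨le_refl 0, zero_le_one⟩) (Set.mem_Icc.mpr ⟨h0, h1⟩) h0
  have hψ0 : ψ 0 = 0 := by simp [hψ]
  rw [hψ0] at h
  simp only [hψ] at h
  linarith

noncomputable def gr (d : ℕ) (r : ℝ) : ℝ :=
  (((d:ℝ)+r)^d - ((d:ℝ)-r)^d) / (((d:ℝ)+r)^d + ((d:ℝ)-r)^d)

lemma gr_bounds (m : ℕ) (r : ℝ) (h0 : 0 < r) (h1 : r ≤ 1) :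
    gr (m+2) r ≤ r - (((m:ℝ)+3)*((m:ℝ)+1)^(m+1)/(3*((m:ℝ)+3)^(m+2))) * r^3 ∧
    r - (((m:ℝ)+1)*((m:ℝ)+3)^(m+1)/(3*((m:ℝ)+1)^(m+2))) * r^3 ≤ gr (m+2) r ∧
    (((m:ℝ)+2)*((m:ℝ)+1)^(m+1)/((m:ℝ)+3)^(m+2)) * r ≤ gr (m+2) r := by
  have hcast : ((m+2 : ℕ) : ℝ) = (m:ℝ)+2 := by push_cast; ring
  set P : ℝ := (((m:ℝ)+2)+r)^(m+2) with hP
  set Q : ℝ := (((m:ℝ)+2)-r)^(m+2) with hQ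
  have hgr : gr (m+2) r = (P - Q) / (P + Q) := by
    rw [gr, hcast]
  have hQpos : 0 < Q := pow_pos (by linarith) _
  have hPpos : 0 < P := pow_pos (by linarith) _
  have hS : 0 < P + Q := by linarith
  have hPub : P ≤ ((m:ℝ)+3)^(m+2) := pow_le_pow_left₀ (by linarith) (by linarith) _
  have hQub : Q ≤ ((m:ℝ)+3)^(m+2) := pow_le_pow_left₀ (by linarith) (by linarith) _
  have hQlb : ((m:ℝ)+1)^(m+2) ≤ Q := pow_le_pow_left₀ (by positivity) (by linarith) _
  have hPlb : ((m:ℝ)+1)^(m+2) ≤ P := pow_le_pow_left₀ (by positivity) (by linarith) _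
  have hm3 : (0:ℝ) < ((m:ℝ)+3)^(m+2) := by positivity
  have hm1 : (0:ℝ) < ((m:ℝ)+1)^(m+2) := by positivity
  have hr3 : (0:ℝ) < r^3 := by positivity
  have hphi_lb := phi_lb m r h0.le h1
  have hphi_ub := phi_ub m r h0.le h1
  refine ⟨?_, ?_, ?_⟩
  · -- upper cubic bound
    rw [hgr, div_le_iff₀ hS]
    have e1 : (((m:ℝ)+3)*((m:ℝ)+1)^(m+1)/(3*((m:ℝ)+3)^(m+2))) * r^3 * (P+Q) ≤
        (((m:ℝ)+3)*((m:ℝ)+1)^(m+1)/(3*((m:ℝ)+3)^(m+2))) * r^3 * (2*((m:ℝ)+3)^(m+2)) := by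
      apply mul_le_mul_of_nonneg_left (by linarith) (by positivity)
    have e2 : (((m:ℝ)+3)*((m:ℝ)+1)^(m+1)/(3*((m:ℝ)+3)^(m+2))) * r^3 * (2*((m:ℝ)+3)^(m+2)) =
        (2/3)*((m:ℝ)+3)*((m:ℝ)+1)^(m+1) * r^3 := by
      field_simp
    nlinarith [hphi_lb]
  · -- lower cubic bound
    rw [hgr, le_div_iff₀ hS]
    have e1 : (((m:ℝ)+1)*((m:ℝ)+3)^(m+1)/(3*((m:ℝ)+1)^(m+2))) * r^3 * (P+Q) ≥
        (((m:ℝ)+1)*((m:ℝ)+3)^(m+1)/(3*((m:ℝ)+1)^(m+2))) * r^3 * (2*((m:ℝ)+1)^(m+2)) := by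
      apply mul_le_mul_of_nonneg_left (by linarith) (by positivity)
    have e2 : (((m:ℝ)+1)*((m:ℝ)+3)^(m+1)/(3*((m:ℝ)+1)^(m+2))) * r^3 * (2*((m:ℝ)+1)^(m+2)) =
        (2/3)*((m:ℝ)+1)*((m:ℝ)+3)^(m+1) * r^3 := by
      field_simp
    nlinarith [hphi_ub]
  · -- linear lower bound
    rw [hgr, le_div_iff₀ hS]
    have key := le_pow_succ_sub (((m:ℝ)+2)+r) (((m:ℝ)+2)-r) (by linarith) (by linarith) (m+1)
    have hpw : ((m:ℝ)+1)^(m+1) ≤ (((m:ℝ)+2)-r)^(m+1) :=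
      pow_le_pow_left₀ (by positivity) (by linarith) _
    have e1 : ((m:ℝ)+2) * ((m:ℝ)+1)^(m+1) * (2*r) ≤
        (((m+1:ℕ):ℝ)+1) * (((m:ℝ)+2)-r)^(m+1) * ((((m:ℝ)+2)+r) - (((m:ℝ)+2)-r)) := by
      push_cast
      have := mul_le_mul_of_nonneg_right hpw
        (mul_nonneg (by positivity : (0:ℝ) ≤ (m:ℝ)+2) (by linarith : (0:ℝ) ≤ 2*r))
      nlinarith [this]
    have e2 : ((m:ℝ)+2) * ((m:ℝ)+1)^(m+1) * (2*r) ≤ P - Q := e1.trans key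
    have e3 : (((m:ℝ)+2)*((m:ℝ)+1)^(m+1)/((m:ℝ)+3)^(m+2)) * r * (P+Q) ≤
        (((m:ℝ)+2)*((m:ℝ)+1)^(m+1)/((m:ℝ)+3)^(m+2)) * r * (2*((m:ℝ)+3)^(m+2)) := by
      apply mul_le_mul_of_nonneg_left (by linarith) (by positivity)
    have e4 : (((m:ℝ)+2)*((m:ℝ)+1)^(m+1)/((m:ℝ)+3)^(m+2)) * r * (2*((m:ℝ)+3)^(m+2)) =
        ((m:ℝ)+2) * ((m:ℝ)+1)^(m+1) * (2*r) := by
      field_simp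
    linarith

lemma betaCrit_pos' (d : ℕ) (hd : 2 ≤ d) : 0 < (1 / 2) * Real.log (((d : ℝ) + 1) / ((d : ℝ) - 1)) := by
  have h2 : (2:ℝ) ≤ d := by exact_mod_cast hd
  have : (1:ℝ) < ((d : ℝ) + 1) / ((d : ℝ) - 1) := by
    rw [lt_div_iff₀ (by linarith)]
    linarith
  have := Real.log_pos this
  linarith

lemma exp_key (d : ℕ) (hd : 2 ≤ d) :
    (d:ℝ) * (Real.exp ((1 / 2) * Real.log (((d : ℝ) + 1) / ((d : ℝ) - 1)))
      - Real.exp (-((1 / 2) * Real.log (((d : ℝ) + 1) / ((d : ℝ) - 1))))) =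
    Real.exp ((1 / 2) * Real.log (((d : ℝ) + 1) / ((d : ℝ) - 1)))
      + Real.exp (-((1 / 2) * Real.log (((d : ℝ) + 1) / ((d : ℝ) - 1)))) := by
  have h2 : (2:ℝ) ≤ d := by exact_mod_cast hd
  set β := (1 / 2) * Real.log (((d : ℝ) + 1) / ((d : ℝ) - 1)) with hβ
  set E := Real.exp β with hE
  have hEpos : 0 < E := Real.exp_pos β
  have hcpos : 0 < ((d : ℝ) + 1) / ((d : ℝ) - 1) := by
    apply div_pos <;> linarith
  have hE2 : E^2 = ((d : ℝ) + 1) / ((d : ℝ) - 1) := by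
    rw [hE, sq, ← Real.exp_add]
    have h : β + β = Real.log (((d : ℝ) + 1) / ((d : ℝ) - 1)) := by rw [hβ]; ring
    rw [h, Real.exp_log hcpos]
  have hEinv : Real.exp (-β) = E⁻¹ := by rw [Real.exp_neg]
  rw [hEinv]
  have hd1 : ((d:ℝ) - 1) ≠ 0 := by linarith
  have hEne : E ≠ 0 := ne_of_gt hEpos
  field_simp
  field_simp at hE2
  nlinarith [hE2]

lemma cosh_mono' (u v : ℝ) (h0 : 0 ≤ u) (huv : u < v) :
    Real.exp u + Real.exp (-u) < Real.exp v + Real.exp (-v) := by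
  have ha : 1 ≤ Real.exp u := Real.one_le_exp h0
  have hab : Real.exp u < Real.exp v := Real.exp_lt_exp.2 huv
  have hu : Real.exp (-u) * Real.exp u = 1 := by rw [← Real.exp_add]; simp
  have hv : Real.exp (-v) * Real.exp v = 1 := by rw [← Real.exp_add]; simp
  have h1 : Real.exp (-u) ≤ 1 := Real.exp_le_one_iff.2 (by linarith)
  have h2 : Real.exp (-v) < 1 := Real.exp_lt_one_iff.2 (by linarith)
  have key : Real.exp (-u) - Real.exp (-v) =
      Real.exp (-u) * Real.exp (-v) * (Real.exp v - Real.exp u) := by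
    linear_combination (Real.exp (-v)) * hu - (Real.exp (-u)) * hv
  have hM : Real.exp (-u) * Real.exp (-v) < 1 := by
    nlinarith [Real.exp_pos (-u), Real.exp_pos (-v)]
  have := mul_lt_mul_of_pos_right hM (sub_pos.2 hab)
  linarith [key, this]

lemma xy_pos_lt (β : ℝ) (hβ : 0 < β) (d : ℕ) (hd : 2 ≤ d) :
    ∀ n, 0 < (xy β d n).2 ∧ (xy β d n).2 < (xy β d n).1
  | 0 => by
    have h2 : (2:ℝ) ≤ d := by exact_mod_cast hd
    constructor
    · show (0:ℝ) < (Real.exp (β * ((d : ℝ) - 1)) + Real.exp (-β * ((d : ℝ) - 1))) ^ d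
      positivity
    · show (Real.exp (β * ((d : ℝ) - 1)) + Real.exp (-β * ((d : ℝ) - 1))) ^ d <
        (Real.exp (β * ((d : ℝ) + 1)) + Real.exp (-β * ((d : ℝ) + 1))) ^ d
      have h := cosh_mono' (β * ((d:ℝ)-1)) (β * ((d:ℝ)+1))
        (by nlinarith) (by nlinarith)
      rw [show -β * ((d:ℝ)-1) = -(β * ((d:ℝ)-1)) by ring,
        show -β * ((d:ℝ)+1) = -(β * ((d:ℝ)+1)) by ring]
      exact pow_lt_pow_left₀ h (by positivity) (by omega)
  | n + 1 => by
    obtain ⟨hy, hyx⟩ := xy_pos_lt β hβ d hd n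
    have hE : Real.exp (-β) < Real.exp β := Real.exp_lt_exp.2 (by linarith)
    have hFpos : 0 < Real.exp (-β) := Real.exp_pos _
    have hB : 0 < Real.exp β * (xy β d n).2 + Real.exp (-β) * (xy β d n).1 := by
      have := Real.exp_pos β
      nlinarith
    have hAB : Real.exp β * (xy β d n).2 + Real.exp (-β) * (xy β d n).1 <
        Real.exp β * (xy β d n).1 + Real.exp (-β) * (xy β d n).2 := by nlinarith
    exact ⟨pow_pos hB d, pow_lt_pow_left₀ hAB hB.le (by omega)⟩

lemma s_rec (β : ℝ) (d : ℕ) (hd : 2 ≤ d)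
    (hkey : (d:ℝ)*(Real.exp β - Real.exp (-β)) = Real.exp β + Real.exp (-β))
    (x y : ℝ) (hy : 0 < y) (hxy : y < x) :
    ((Real.exp β * x + Real.exp (-β) * y)^d - (Real.exp β * y + Real.exp (-β) * x)^d) /
      ((Real.exp β * x + Real.exp (-β) * y)^d + (Real.exp β * y + Real.exp (-β) * x)^d)
    = gr d ((x - y)/(x + y)) := by
  set E := Real.exp β with hE
  set F := Real.exp (-β) with hF
  have hEpos : 0 < E := Real.exp_pos _
  have hFpos : 0 < F := Real.exp_pos _
  have hd0 : ((d:ℝ)) ≠ 0 := Nat.cast_ne_zero.2 (by omega)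
  have hxy0 : x + y ≠ 0 := ne_of_gt (by linarith)
  set r : ℝ := (x - y)/(x + y) with hr
  set K : ℝ := (E+F)*(x+y)/(2*(d:ℝ)) with hK
  have hdpos : (0:ℝ) < (d:ℝ) := by exact_mod_cast Nat.pos_of_ne_zero (by omega)
  have hKpos : 0 < K := by
    rw [hK]
    exact div_pos (mul_pos (by linarith) (by linarith)) (by linarith)
  have hA : E*x + F*y = K*((d:ℝ)+r) := by
    rw [hK, hr]
    field_simp
    linear_combination (x - y) * hkey
  have hB : E*y + F*x = K*((d:ℝ)-r) := by
    rw [hK, hr]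
    field_simp
    linear_combination (y - x) * hkey
  rw [hA, hB, mul_pow, mul_pow, ← mul_sub, ← mul_add,
    mul_div_mul_left _ _ (pow_ne_zero d (ne_of_gt hKpos))]
  rfl

lemma u_step (m : ℕ) (r : ℝ) (h0 : 0 < r) (h1 : r ≤ 1) :
    0 < gr (m+2) r ∧ gr (m+2) r < r ∧
    1/r^2 + (((m:ℝ)+3)*((m:ℝ)+1)^(m+1)/(3*((m:ℝ)+3)^(m+2))) ≤ 1/(gr (m+2) r)^2 ∧
    1/(gr (m+2) r)^2 ≤ 1/r^2 +
      2*(((m:ℝ)+1)*((m:ℝ)+3)^(m+1)/(3*((m:ℝ)+1)^(m+2)))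
        / ((((m:ℝ)+2)*((m:ℝ)+1)^(m+1)/((m:ℝ)+3)^(m+2)))^2 := by
  obtain ⟨hub, hlb, hlin⟩ := gr_bounds m r h0 h1
  set κ1 : ℝ := ((m:ℝ)+3)*((m:ℝ)+1)^(m+1)/(3*((m:ℝ)+3)^(m+2)) with hκ1
  set κ2 : ℝ := ((m:ℝ)+1)*((m:ℝ)+3)^(m+1)/(3*((m:ℝ)+1)^(m+2)) with hκ2
  set ρ : ℝ := ((m:ℝ)+2)*((m:ℝ)+1)^(m+1)/((m:ℝ)+3)^(m+2) with hρ
  set g : ℝ := gr (m+2) r with hg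
  have hκ1pos : 0 < κ1 := by rw [hκ1]; positivity
  have hκ2pos : 0 < κ2 := by rw [hκ2]; positivity
  have hρpos : 0 < ρ := by rw [hρ]; positivity
  have hgpos : 0 < g := lt_of_lt_of_le (by positivity) hlin
  have hκ1le1 : κ1 ≤ 1 := by
    rw [hκ1, div_le_one (by positivity)]
    have h1' : ((m:ℝ)+1)^(m+1) ≤ ((m:ℝ)+3)^(m+1) :=
      pow_le_pow_left₀ (by positivity) (by linarith) _
    have : ((m:ℝ)+3)*((m:ℝ)+3)^(m+1) = ((m:ℝ)+3)^(m+2) := by rw [← pow_succ']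
    nlinarith [pow_pos (show (0:ℝ) < (m:ℝ)+3 by positivity) (m+2)]
  have ha0 : 0 ≤ κ1*r^2 := by positivity
  have ha1 : κ1*r^2 ≤ 1 := by nlinarith
  have hglt : g < r := by linarith [hub, mul_pos hκ1pos (pow_pos h0 3)]
  have hr2 : (0:ℝ) < r^2 := by positivity
  have hg2 : (0:ℝ) < g^2 := by positivity
  refine ⟨hgpos, hglt, ?_, ?_⟩
  · -- lower step
    have hsq : g^2 ≤ (r - κ1*r^3)^2 := by nlinarith [hub, hgpos]
    have haux : (1-κ1*r^2)^2*(1+κ1*r^2) ≤ 1 := by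
      nlinarith [mul_nonneg ha0 (sub_nonneg.2 ha1),
        mul_nonneg (mul_nonneg ha0 ha0) (sub_nonneg.2 ha1)]
    have key : g^2 * (1 + κ1*r^2) ≤ r^2 := by
      have e1 := mul_le_mul_of_nonneg_right hsq (by linarith : (0:ℝ) ≤ 1 + κ1*r^2)
      have e2 := mul_le_mul_of_nonneg_left haux (sq_nonneg r)
      nlinarith [e1, e2]
    have e : 1/r^2 + κ1 = (1+κ1*r^2)/r^2 := by field_simp
    rw [e, div_le_div_iff₀ hr2 hg2]
    nlinarith [key]
  · -- upper step
    have hgr2 : ρ^2*r^2 ≤ g^2 := by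
      have := mul_le_mul hlin hlin (by positivity : (0:ℝ) ≤ ρ*r) hgpos.le
      nlinarith [this]
    have hup : r^2 - g^2 ≤ 2*κ2*r^4 := by
      have e1 : (r-g)*(r+g) ≤ (κ2*r^3)*(r+g) :=
        mul_le_mul_of_nonneg_right (by linarith) (by linarith)
      have e2 : (κ2*r^3)*(r+g) ≤ (κ2*r^3)*(2*r) :=
        mul_le_mul_of_nonneg_left (by linarith) (by positivity)
      nlinarith [e1, e2]
    have hq : 2*κ2*r^4 ≤ (2*κ2/ρ^2)*r^2*g^2 := by
      have e1 := mul_le_mul_of_nonneg_left hgr2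
        (show (0:ℝ) ≤ (2*κ2/ρ^2)*r^2 by positivity)
      have e2 : (2*κ2/ρ^2)*r^2*(ρ^2*r^2) = 2*κ2*r^4 := by
        field_simp
      nlinarith [e1, e2]
    have key2 : r^2 ≤ g^2 + (2*κ2/ρ^2)*r^2*g^2 := by linarith
    have e : 1/r^2 + 2*κ2/ρ^2 = (1+(2*κ2/ρ^2)*r^2)/r^2 := by
      have hgen : ∀ q : ℝ, 1/r^2 + q = (1+q*r^2)/r^2 := fun q => by
        field_simp
      exact hgen _
    rw [e, div_le_div_iff₀ hg2 hr2]
    nlinarith [key2]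

/-- At the critical inverse temperature, the quantity `(x_{n−1} − y_{n−1})/(x_{n−1} + y_{n−1})`
is bounded above and below by constant multiples of `n^{-1/2}`. -/
theorem critical_ratio_one_arm (d : ℕ) (hd : 2 ≤ d) :
    ∃ c C : ℝ, 0 < c ∧ 0 < C ∧ ∀ n : ℕ, 1 ≤ n →
      c * (n : ℝ) ^ (-(1 / 2 : ℝ)) <
          ((xy (betaCrit d) d (n - 1)).1 - (xy (betaCrit d) d (n - 1)).2) /
            ((xy (betaCrit d) d (n - 1)).1 + (xy (betaCrit d) d (n - 1)).2) ∧
        ((xy (betaCrit d) d (n - 1)).1 - (xy (betaCrit d) d (n - 1)).2) /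
            ((xy (betaCrit d) d (n - 1)).1 + (xy (betaCrit d) d (n - 1)).2) <
          C * (n : ℝ) ^ (-(1 / 2 : ℝ)) := by
  obtain ⟨m, rfl⟩ : ∃ m, d = m + 2 := ⟨d - 2, by omega⟩
  set β := betaCrit (m+2) with hβdef
  have hβ : 0 < β := by rw [hβdef, betaCrit]; exact betaCrit_pos' (m+2) (by omega)
  have hkey : (((m+2:ℕ)):ℝ) * (Real.exp β - Real.exp (-β)) = Real.exp β + Real.exp (-β) := by
    rw [hβdef, betaCrit]; exact exp_key (m+2) (by omega)
  set s : ℕ → ℝ := fun n =>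
    ((xy β (m+2) n).1 - (xy β (m+2) n).2)/((xy β (m+2) n).1 + (xy β (m+2) n).2) with hs
  have hpos := xy_pos_lt β hβ (m+2) (by omega)
  have hs01 : ∀ n, 0 < s n ∧ s n < 1 := by
    intro n; obtain ⟨h1, h2⟩ := hpos n
    constructor
    · exact div_pos (by linarith) (by linarith)
    · rw [hs]
      rw [div_lt_one (by linarith)]; linarith
  have hrec : ∀ n, s (n+1) = gr (m+2) (s n) := by
    intro n
    obtain ⟨h1, h2⟩ := hpos n
    have h := s_rec β (m+2) (by omega) hkey (xy β (m+2) n).1 (xy β (m+2) n).2 h1 h2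
    exact h
  set κ1 : ℝ := ((m:ℝ)+3)*((m:ℝ)+1)^(m+1)/(3*((m:ℝ)+3)^(m+2)) with hκ1
  set q : ℝ := 2*(((m:ℝ)+1)*((m:ℝ)+3)^(m+1)/(3*((m:ℝ)+1)^(m+2)))
        / ((((m:ℝ)+2)*((m:ℝ)+1)^(m+1)/((m:ℝ)+3)^(m+2)))^2 with hq
  have hκ1pos : 0 < κ1 := by rw [hκ1]; positivity
  have hqpos : 0 < q := by rw [hq]; positivity
  have hu : ∀ n, 1/(s 0)^2 + κ1*n ≤ 1/(s n)^2 ∧ 1/(s n)^2 ≤ 1/(s 0)^2 + q*n := by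
    intro n
    induction n with
    | zero => simp
    | succ n ih =>
      obtain ⟨_, _, hlo, hhi⟩ := u_step m (s n) (hs01 n).1 (hs01 n).2.le
      rw [← hrec n] at hlo hhi
      push_cast
      constructor
      · linarith [ih.1]
      · linarith [ih.2]
  set u0 : ℝ := 1/(s 0)^2 with hu0
  have hu0pos : 0 < u0 := by
    rw [hu0]; exact div_pos one_pos (pow_pos (hs01 0).1 2)
  set X : ℝ := u0 + q with hX
  have hXpos : 0 < X := by rw [hX]; linarith
  set m0 : ℝ := min u0 κ1 with hm0
  have hm0pos : 0 < m0 := lt_min hu0pos hκ1pos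
  refine ⟨1/(2*Real.sqrt X), 2/Real.sqrt m0, ?_, ?_, ?_⟩
  · have := Real.sqrt_pos.2 hXpos; positivity
  · have := Real.sqrt_pos.2 hm0pos; positivity
  · intro n hn
    obtain ⟨k, rfl⟩ : ∃ k, n = k + 1 := ⟨n-1, by omega⟩
    simp only [Nat.add_sub_cancel]
    set N : ℝ := ((k+1 : ℕ) : ℝ) with hN
    have hN1 : (1:ℝ) ≤ N := by rw [hN]; push_cast; linarith
    have hNpos : (0:ℝ) < N := by linarith
    set t : ℝ := N ^ (-(1/2 : ℝ)) with ht
    have htpos : 0 < t := Real.rpow_pos_of_pos hNpos _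
    have ht2 : t^2 = 1/N := by
      rw [ht, ← Real.rpow_natCast (N ^ (-(1/2 : ℝ))) 2, ← Real.rpow_mul hNpos.le]
      norm_num
      rw [Real.rpow_neg_one]
    have hsk : 0 < s k := (hs01 k).1
    have hsk2 : 0 < (s k)^2 := pow_pos hsk 2
    obtain ⟨hLo, hHi⟩ := hu k
    have hkN : (k:ℝ) = N - 1 := by rw [hN]; push_cast; ring
    constructor
    · -- lower bound
      have hA : 1/(s k)^2 ≤ X*N := by
        rw [hX]
        rw [hkN] at hHi
        nlinarith [hHi, hu0pos, hqpos, hN1]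
      have h1 : 1 ≤ X*N*(s k)^2 := by
        have := (div_le_iff₀ hsk2).1 hA
        linarith
      have hsq : (1/(2*Real.sqrt X) * t)^2 < (s k)^2 := by
        have hsX : Real.sqrt X ^ 2 = X := Real.sq_sqrt hXpos.le
        have he : (1/(2*Real.sqrt X) * t)^2 = t^2 / (4*X) := by
          field_simp
          nlinarith [hsX]
        rw [he, ht2]
        rw [div_div, div_lt_iff₀ (by positivity)]
        nlinarith [h1, hsk2, hXpos, hNpos]
      have hnn : 0 ≤ 1/(2*Real.sqrt X) * t := by positivity
      exact lt_of_pow_lt_pow_left₀ 2 hsk.le hsq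
    · -- upper bound
      have hB : m0*N ≤ 1/(s k)^2 := by
        rw [hkN] at hLo
        have h1 : m0 ≤ u0 := min_le_left _ _
        have h2 : m0 ≤ κ1 := min_le_right _ _
        nlinarith [hLo, hN1, hm0pos]
      have h1 : m0*N*(s k)^2 ≤ 1 := by
        have := (le_div_iff₀ hsk2).1 hB
        linarith
      have hsq : (s k)^2 < (2/Real.sqrt m0 * t)^2 := by
        have hsm : Real.sqrt m0 ^ 2 = m0 := Real.sq_sqrt hm0pos.le
        have hsmpos : 0 < Real.sqrt m0 := Real.sqrt_pos.2 hm0pos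
        have he : (2/Real.sqrt m0 * t)^2 = 4*t^2 / m0 := by
          field_simp
          nlinarith [hsm]
        rw [he, ht2]
        rw [lt_div_iff₀ hm0pos]
        have hNinv : (1/N)*N = 1 := by field_simp
        nlinarith [h1, hNpos, hm0pos, hsk2, hNinv]
      have hnn : 0 ≤ 2/Real.sqrt m0 * t := by positivity
      exact lt_of_pow_lt_pow_left₀ 2 hnn hsq
end

section
/- Let d ≥ 2 be an integer, n ≥ 1 an integer, and k > 0 with k² ≤ n. Let 0 < y < x be reals. If y/x ≤ K^d_{√n}(k), then g(y/x) ≤ 1 − k/√n, where g is the critical iteration map with b = (d+1)/(d−1) (corresponding to β = β_c = arctanh(1/d)). -/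
/-- `K^d_{√n}(k) = (−(d+1)(1 − k/√n)^{1/d} + (d−1)) / ((d−1)(1 − k/√n)^{1/d} − (d+1))`. -/
noncomputable def Kfun (d n : ℕ) (k : ℝ) : ℝ :=
  (-((d : ℝ) + 1) * (1 - k / Real.sqrt n) ^ (1 / (d : ℝ)) + ((d : ℝ) - 1)) /
    (((d : ℝ) - 1) * (1 - k / Real.sqrt n) ^ (1 / (d : ℝ)) - ((d : ℝ) + 1))

/-- The iteration map `g(x) = (x + (1 − x²)/(b + x))^d` at criticality, where
`b = e^{2β_c} = (d+1)/(d−1)`. -/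
noncomputable def gcrit (d : ℕ) (x : ℝ) : ℝ :=
  (x + (1 - x ^ 2) / (((d : ℝ) + 1) / ((d : ℝ) - 1) + x)) ^ d

/-- If `y/x ≤ K^d_{√n}(k)` then `g(y/x) ≤ 1 − k/√n` for the critical iteration map `g`. -/
theorem g_le_of_le_K (d : ℕ) (hd : 2 ≤ d) (n : ℕ) (hn : 1 ≤ n) (k : ℝ) (hk : 0 < k)
    (hkn : k ^ 2 ≤ (n : ℝ)) (x y : ℝ) (hy : 0 < y) (hyx : y < x)
    (h : y / x ≤ Kfun d n k) :
    gcrit d (y / x) ≤ 1 - k / Real.sqrt n := by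
  have hd2 : (2 : ℝ) ≤ (d : ℝ) := by exact_mod_cast hd
  have hD1 : (0 : ℝ) < (d : ℝ) - 1 := by linarith
  have hn0 : (0 : ℝ) < (n : ℝ) := by exact_mod_cast hn
  have hsq : 0 < Real.sqrt n := Real.sqrt_pos.mpr hn0
  have hk' : k ≤ Real.sqrt n := by
    exact (Real.le_sqrt hk.le hn0.le).mpr hkn
  set s : ℝ := 1 - k / Real.sqrt n with hs_def
  have hs0 : 0 ≤ s := by
    have : k / Real.sqrt n ≤ 1 := (div_le_one hsq).mpr hk'
    simp [hs_def]; linarith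
  have hs1 : s < 1 := by
    have : 0 < k / Real.sqrt n := div_pos hk hsq
    simp only [hs_def]; linarith
  set A : ℝ := s ^ (1 / (d : ℝ)) with hA_def
  have hA0 : 0 ≤ A := Real.rpow_nonneg hs0 _
  have hA1 : A ≤ 1 := Real.rpow_le_one hs0 hs1.le (by positivity)
  have hAd : A ^ d = s := by
    rw [hA_def, ← Real.rpow_natCast (s ^ (1 / (d : ℝ))) d, ← Real.rpow_mul hs0]
    rw [one_div_mul_cancel (by positivity : (d : ℝ) ≠ 0), Real.rpow_one]
  set t : ℝ := y / x with ht_def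
  have hx : 0 < x := hy.trans hyx
  have ht0 : 0 < t := div_pos hy hx
  have ht1 : t < 1 := (div_lt_one hx).mpr hyx
  set b : ℝ := ((d : ℝ) + 1) / ((d : ℝ) - 1) with hb_def
  have hb1 : 1 < b := (one_lt_div hD1).mpr (by linarith)
  have hbt : 0 < b + t := by linarith
  -- denominator of Kfun is negative
  have hden : ((d : ℝ) - 1) * A - ((d : ℝ) + 1) < 0 := by nlinarith
  have hK : (-((d : ℝ) + 1) * A + ((d : ℝ) - 1)) ≤ t * (((d : ℝ) - 1) * A - ((d : ℝ) + 1)) := by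
    have := h
    rw [Kfun] at this
    rw [le_div_iff_of_neg hden] at this
    exact this
  have hbase : t + (1 - t ^ 2) / (b + t) = (1 + b * t) / (b + t) := by
    field_simp
    ring
  have hkey : (1 + b * t) / (b + t) ≤ A := by
    rw [div_le_iff₀ hbt]
    have hb' : b * ((d : ℝ) - 1) = (d : ℝ) + 1 := by
      rw [hb_def]; field_simp
    nlinarith [hK, hD1, hbt]
  have hbase0 : 0 ≤ (1 + b * t) / (b + t) := by positivity
  calc gcrit d t = ((1 + b * t) / (b + t)) ^ d := by rw [gcrit, ← hb_def, hbase]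
    _ ≤ A ^ d := pow_le_pow_left₀ hbase0 hkey d
    _ = s := hAd
end

section
/- Let d ≥ 2 be an integer, n ≥ 1 an integer, and k > 0 with k² ≤ n. Let 0 < y < x be reals. If y/x ≥ K^d_{√n}(k), then g(y/x) ≥ 1 − k/√n, where g is the critical iteration map with b = (d+1)/(d−1) (corresponding to β = β_c = arctanh(1/d)). -/
/-- If `y/x ≥ K^d_{√n}(k)` then `g(y/x) ≥ 1 − k/√n` for the critical iteration map `g`. -/
theorem g_ge_of_ge_K (d : ℕ) (hd : 2 ≤ d) (n : ℕ) (hn : 1 ≤ n) (k : ℝ) (hk : 0 < k)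
    (hkn : k ^ 2 ≤ (n : ℝ)) (x y : ℝ) (hy : 0 < y) (hyx : y < x)
    (h : y / x ≥ Kfun d n k) :
    gcrit d (y / x) ≥ 1 - k / Real.sqrt n := by
  have hd2 : (2:ℝ) ≤ (d:ℝ) := by exact_mod_cast hd
  set t := y / x with ht
  have ht0 : 0 < t := div_pos hy (hy.trans hyx)
  have hn0 : (0:ℝ) < Real.sqrt n := Real.sqrt_pos.mpr (by exact_mod_cast hn)
  have hk' : k ≤ Real.sqrt n := by
    nlinarith [Real.sq_sqrt (show (0:ℝ) ≤ (n:ℝ) by positivity), hn0]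
  set c := 1 - k / Real.sqrt n with hcdef
  have hc0 : 0 ≤ c := by
    have h1 : k / Real.sqrt n ≤ 1 := (div_le_one hn0).mpr hk'
    show (0:ℝ) ≤ 1 - k / Real.sqrt n
    linarith
  have hc1 : c < 1 := by
    have h1 : 0 < k / Real.sqrt n := div_pos hk hn0
    show 1 - k / Real.sqrt n < 1
    linarith
  set s := c ^ (1 / (d:ℝ)) with hsdef
  have hs0 : 0 ≤ s := Real.rpow_nonneg hc0 _
  have hs1 : s ≤ 1 := Real.rpow_le_one hc0 hc1.le (by positivity)
  have hden : ((d:ℝ) - 1) * s - ((d:ℝ) + 1) < 0 := by nlinarith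
  rw [ge_iff_le, Kfun, div_le_iff_of_neg hden] at h
  have key : s * (((d:ℝ) + 1) + ((d:ℝ) - 1) * t) ≤ ((d:ℝ) + 1) * t + ((d:ℝ) - 1) := by
    nlinarith [h]
  have hD2 : 0 < ((d:ℝ) + 1) + ((d:ℝ) - 1) * t := by nlinarith
  have hA : s ≤ (((d:ℝ) + 1) * t + ((d:ℝ) - 1)) / (((d:ℝ) + 1) + ((d:ℝ) - 1) * t) :=
    (le_div_iff₀ hD2).mpr key
  have hg : gcrit d t =
      ((((d:ℝ) + 1) * t + ((d:ℝ) - 1)) / (((d:ℝ) + 1) + ((d:ℝ) - 1) * t)) ^ d := by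
    clear_value t
    unfold gcrit
    congr 1
    have h1 : ((d:ℝ) - 1) ≠ 0 := by linarith
    have e1 : ((d:ℝ) + 1) / ((d:ℝ) - 1) + t
        = (((d:ℝ) + 1) + ((d:ℝ) - 1) * t) / ((d:ℝ) - 1) := by
      field_simp
    rw [e1, div_div_eq_mul_div, add_div' _ _ _ hD2.ne']
    congr 1
    ring
  have hsd : s ^ d = c := by
    rw [hsdef, ← Real.rpow_natCast (c ^ (1 / (d:ℝ))) d, ← Real.rpow_mul hc0]
    rw [one_div_mul_cancel (by positivity : ((d:ℝ)) ≠ 0), Real.rpow_one]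
  rw [ge_iff_le, hg, ← hsd]
  exact pow_le_pow_left₀ hs0 hA d
end

section
/- For every integer d ≥ 2, every integer n ≥ 2, and every real k with 0 < k ≤ 1, the inequality K^d_{√n}(k) ≥ 1 − k·(n−1)^{-1/2} holds. -/
set_option maxHeartbeats 1000000 in
/-- **Lower bound on `K`**: for all `d ≥ 2`, `n ≥ 2` and `0 < k ≤ 1`,
`K^d_{√n}(k) ≥ 1 − k·(n−1)^{-1/2}`. -/
theorem Kfun_lower_bound (d : ℕ) (hd : 2 ≤ d) (n : ℕ) (hn : 2 ≤ n) (k : ℝ)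
    (hk : 0 < k) (hk1 : k ≤ 1) :
    Kfun d n k ≥ 1 - k / Real.sqrt ((n : ℝ) - 1) := by
  have hD2 : (2:ℝ) ≤ (d:ℝ) := by exact_mod_cast hd
  have hn2 : (2:ℝ) ≤ (n:ℝ) := by exact_mod_cast hn
  have hn0 : (0:ℝ) ≤ (n:ℝ) := by linarith
  have hsn2 : Real.sqrt (n:ℝ) ^ 2 = (n:ℝ) := Real.sq_sqrt hn0
  have hsm2 : Real.sqrt ((n:ℝ)-1) ^ 2 = (n:ℝ) - 1 := Real.sq_sqrt (by linarith)
  rw [Kfun]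
  set sn := Real.sqrt (n:ℝ) with hsndef
  set sm := Real.sqrt ((n:ℝ)-1) with hsmdef
  have hsn0 : 0 ≤ sn := Real.sqrt_nonneg _
  have hsm0' : 0 ≤ sm := Real.sqrt_nonneg _
  have hsn1 : 1 < sn := by nlinarith
  have hsm0 : 0 < sm := by nlinarith
  have hsmsn : sm ≤ sn := by nlinarith
  set b : ℝ := 1 - k / sn with hbdef
  have hksn1 : k / sn < 1 := by
    rw [div_lt_one (by linarith)]; linarith
  have hksn0 : 0 < k / sn := div_pos hk (by linarith)
  have hb0 : 0 < b := by rw [hbdef]; linarith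
  have hb1 : b < 1 := by rw [hbdef]; linarith
  set t : ℝ := b ^ (1/(d:ℝ)) with htdef
  have hdne : (d:ℝ) ≠ 0 := by positivity
  have ht0 : 0 < t := Real.rpow_pos_of_pos hb0 _
  have htd : t ^ d = b := by
    rw [htdef, ← Real.rpow_natCast (b ^ (1/(d:ℝ))) d, ← Real.rpow_mul hb0.le,
      one_div_mul_cancel hdne, Real.rpow_one]
  have ht1 : t ≤ 1 := Real.rpow_le_one hb0.le hb1.le (by positivity)
  -- k in terms of t
  have hkt : k = sn * (1 - t ^ d) := by
    rw [htd, hbdef]; field_simp; ring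
  have hk2 : (n:ℝ) * (1 - t ^ d) ^ 2 ≤ 1 := by
    have h1 : k ^ 2 ≤ 1 := by
      have := pow_le_pow_left₀ hk.le hk1 2
      simpa using this
    rw [hkt] at h1
    calc (n:ℝ) * (1 - t ^ d) ^ 2 = sn ^ 2 * (1 - t ^ d) ^ 2 := by rw [hsn2]
      _ = (sn * (1 - t ^ d)) ^ 2 := by ring
      _ ≤ 1 := h1
  have htd1 : t ^ d ≤ 1 := pow_le_one₀ ht0.le ht1
  have htd0 : 0 < t ^ d := pow_pos ht0 d
  -- geometric sum
  set S : ℝ := ∑ i ∈ Finset.range d, t ^ i with hSdef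
  have hgeom : (1 - t) * S = 1 - t ^ d := by
    have h := geom_sum_mul t d
    rw [hSdef]; linear_combination (-1 : ℝ) * h
  have hS0 : 0 ≤ S := Finset.sum_nonneg fun i _ => pow_nonneg ht0.le i
  -- AM-GM style lower bound on S via u = sqrt t
  set u : ℝ := Real.sqrt t with hudef
  have hu0 : 0 ≤ u := Real.sqrt_nonneg _
  have hu2 : u ^ 2 = t := Real.sq_sqrt ht0.le
  have hSlb : (d:ℝ) * u ^ (d-1) ≤ S := by
    have refl : ∑ i ∈ Finset.range d, t ^ (d-1-i) = ∑ i ∈ Finset.range d, t ^ i :=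
      Finset.sum_range_reflect (fun i => t ^ i) d
    have hterm : ∀ i ∈ Finset.range d, 2 * u ^ (d-1) ≤ t ^ i + t ^ (d-1-i) := by
      intro i hi
      have hid : i ≤ d - 1 := Nat.le_pred_of_lt (Finset.mem_range.mp hi)
      have e1 : t ^ i = (u ^ i) ^ 2 := by rw [← hu2]; ring
      have e2 : t ^ (d-1-i) = (u ^ (d-1-i)) ^ 2 := by rw [← hu2]; ring
      have e3 : u ^ i * u ^ (d-1-i) = u ^ (d-1) := by
        rw [← pow_add]; congr 1; omega
      rw [e1, e2, ← e3]
      linarith [sq_nonneg (u ^ i - u ^ (d-1-i))]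
    have hsum := Finset.sum_le_sum hterm
    have hconst : ∑ _i ∈ Finset.range d, 2 * u ^ (d-1) = (d:ℝ) * (2 * u ^ (d-1)) := by
      rw [Finset.sum_const, Finset.card_range, nsmul_eq_mul]
    have hsplit : ∑ i ∈ Finset.range d, (t ^ i + t ^ (d-1-i)) = 2 * S := by
      rw [Finset.sum_add_distrib, refl, hSdef]; ring
    rw [hconst, hsplit] at hsum
    linarith only [hsum]
  have hu2d : (u ^ (d-1)) ^ 2 * t = t ^ d := by
    rw [← pow_mul, Nat.mul_comm, pow_mul, hu2, ← pow_succ]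
    congr 1; omega
  -- Bernoulli : 1 - d(1-t) ≤ t^d
  have hbern : 1 - (d:ℝ) * (1 - t) ≤ t ^ d := by
    have h := one_add_mul_le_pow (a := t - 1) (by linarith) d
    calc 1 - (d:ℝ) * (1 - t) = 1 + (d:ℝ) * (t - 1) := by ring
      _ ≤ (1 + (t - 1)) ^ d := h
      _ = t ^ d := by norm_num
  -- pointwise bound : (2 + (d-1)(1-t))^2 ≥ 4 t (2 - t^d)
  have hpoint : 4 * t * (2 - t ^ d) ≤ (2 + ((d:ℝ)-1) * (1-t)) ^ 2 := by
    have h1 : 1 - t ^ d ≤ (d:ℝ) * (1 - t) := by linarith only [hbern]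
    linarith only [h1, mul_nonneg (sub_nonneg.mpr ht1) (sub_nonneg.mpr htd1),
      sq_nonneg (((d:ℝ)-1) * (1-t)), ht0.le, ht1, htd1, hD2]
  -- core inequality
  have hcore : 4 * (d:ℝ)^2 * ((n:ℝ)-1) ≤ (n:ℝ) * S^2 * (2 + ((d:ℝ)-1)*(1-t))^2 := by
    have hq0 : 0 ≤ (d:ℝ) * u ^ (d-1) := by positivity
    have hS2 : ((d:ℝ) * u ^ (d-1))^2 ≤ S^2 := pow_le_pow_left₀ hq0 hSlb 2
    have h4t : 0 ≤ 4 * t * (2 - t ^ d) :=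
      mul_nonneg (by linarith only [ht0]) (by linarith only [htd1])
    have hprod : ((d:ℝ) * u ^ (d-1))^2 * (4 * t * (2 - t ^ d))
        ≤ S^2 * (2 + ((d:ℝ)-1)*(1-t))^2 := by
      apply mul_le_mul hS2 hpoint h4t (sq_nonneg _)
    have hval : ((d:ℝ) * u ^ (d-1))^2 * (4 * t * (2 - t ^ d))
        = 4 * (d:ℝ)^2 * (t ^ d * (2 - t ^ d)) := by
      have : ((d:ℝ) * u ^ (d-1))^2 * (4 * t * (2 - t ^ d))
          = 4 * (d:ℝ)^2 * (((u ^ (d-1))^2 * t) * (2 - t ^ d)) := by ring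
      rw [this, hu2d]
    have hfin : 4 * (d:ℝ)^2 * ((n:ℝ)-1) ≤ (n:ℝ) * (4 * (d:ℝ)^2 * (t ^ d * (2 - t ^ d))) := by
      -- n * t^d * (2 - t^d) ≥ n - 1  ⟺  n (1 - t^d)^2 ≤ 1
      have h := mul_le_mul_of_nonneg_left hk2 (show (0:ℝ) ≤ 4*(d:ℝ)^2 by positivity)
      linarith only [h]
    calc 4 * (d:ℝ)^2 * ((n:ℝ)-1)
        ≤ (n:ℝ) * (4 * (d:ℝ)^2 * (t ^ d * (2 - t ^ d))) := hfin
      _ = (n:ℝ) * (((d:ℝ) * u ^ (d-1))^2 * (4 * t * (2 - t ^ d))) := by rw [hval]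
      _ ≤ (n:ℝ) * (S^2 * (2 + ((d:ℝ)-1)*(1-t))^2) := by
          apply mul_le_mul_of_nonneg_left hprod hn0
      _ = (n:ℝ) * S^2 * (2 + ((d:ℝ)-1)*(1-t))^2 := by ring
  -- main inequality : 2 d (1-t) sm ≤ k ((d+1) - (d-1) t)
  have hX2 : (2:ℝ) ≤ ((d:ℝ)+1) - ((d:ℝ)-1)*t := by
    have h : ((d:ℝ)-1)*t ≤ ((d:ℝ)-1)*1 := by
      apply mul_le_mul_of_nonneg_left ht1; linarith only [hD2]
    linarith only [h]
  have hmain : 2*(d:ℝ)*(1-t) * sm ≤ k * (((d:ℝ)+1) - ((d:ℝ)-1)*t) := by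
    have hL0 : 0 ≤ 2*(d:ℝ)*(1-t) * sm := by
      apply mul_nonneg; · apply mul_nonneg (by linarith); linarith
      · exact hsm0'
    have hR0 : 0 ≤ k * (((d:ℝ)+1) - ((d:ℝ)-1)*t) := by
      apply mul_nonneg hk.le; linarith
    apply le_of_pow_le_pow_left₀ two_ne_zero hR0
    have eL : (2*(d:ℝ)*(1-t) * sm)^2 = 4*(d:ℝ)^2*((n:ℝ)-1) * (1-t)^2 := by
      rw [← hsm2]; ring
    have eR : (k * (((d:ℝ)+1) - ((d:ℝ)-1)*t))^2
        = (n:ℝ) * S^2 * (2 + ((d:ℝ)-1)*(1-t))^2 * (1-t)^2 := by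
      rw [hkt, ← hgeom, ← hsn2]; ring
    rw [eL, eR]
    apply mul_le_mul_of_nonneg_right hcore (sq_nonneg _)
  have hmain' : 2*(d:ℝ)*(1-t) ≤ (k/sm) * (((d:ℝ)+1) - ((d:ℝ)-1)*t) := by
    rw [div_mul_eq_mul_div, le_div_iff₀ hsm0]
    linarith only [hmain]
  have hden : ((d:ℝ)-1)*t - ((d:ℝ)+1) < 0 := by linarith
  rw [ge_iff_le, le_div_iff_of_neg hden]
  linarith only [hmain']
end
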